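/- arXiv:2310.09184 — 5 statements merged into one kernel-verified Lean document; each statement's English description precedes it below -/
import Mathlib

section
/- Let T be a binary tree with leaves 1,...,n in left-to-right order. For every i with 1 ≤ i ≤ n, the sequence of left depths ld_T(1),...,ld_T(i) uniquely determines the addresses addr_T(1),...,addr_T(i). In particular, a binary tree is uniquely determined by its left depth sequence. -/
/-!
Consecutive leaf addresses are related by the successor rule `BTree.nextAddr`, whose only free
parameter is the left depth of the new leaf. Since the first address is a run of 0's, the left
depths determine the addresses one after another, and the addresses determine the tree.
-/

/-- Binary trees: every internal vertex has exactly a left and a right child. -/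
inductive BTree : Type where
  | leaf : BTree
  | node : BTree → BTree → BTree

namespace BTree

/-- Number of leaves. -/
def numLeaves : BTree → ℕ
  | leaf => 1
  | node l r => l.numLeaves + r.numLeaves

/-- Addresses of the leaves in left-to-right order, as words over `{0,1}`;
`false` records a left step (0) and `true` a right step (1). -/
def addrs : BTree → List (List Bool)
  | leaf => [[]]
  | node l r => (l.addrs.map (fun w => false :: w)) ++ (r.addrs.map (fun w => true :: w))

/-- Address of the `i`-th leaf (0-indexed, left to right). -/
def addr (T : BTree) (i : ℕ) : List Bool := T.addrs.getD i []

/-- Left depth of the `i`-th leaf: number of left steps (0's) in its address. -/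
def ld (T : BTree) (i : ℕ) : ℕ := (T.addr i).count false

/-- Right depth of the `i`-th leaf: number of right steps (1's) in its address. -/
def rd (T : BTree) (i : ℕ) : ℕ := (T.addr i).count true

/-- Total depth of the `i`-th leaf. -/
def depth (T : BTree) (i : ℕ) : ℕ := (T.addr i).length

end BTree

theorem List.eq_of_isChain_of_map_eq {α β : Type*} {R : α → α → Prop} (f : α → β)
    (hR : ∀ a b b', R a b → R a b' → f b = f b' → b = b') {l l' : List α}
    (hl : l.IsChain R) (hl' : l'.IsChain R)
    (hhead : ∀ a ∈ l.head?, ∀ a' ∈ l'.head?, f a = f a' → a = a')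
    (hf : l.map f = l'.map f) : l = l' := by
  induction l generalizing l' with
  | nil => simpa using hf.symm
  | cons a t ih =>
    obtain ⟨a', t', rfl⟩ := List.exists_cons_of_ne_nil (l := l') (by rintro rfl; simp at hf)
    obtain ⟨hfa, hft⟩ := List.cons_eq_cons.1 hf
    obtain rfl : a = a' := hhead a rfl a' rfl hfa
    congr 1
    match t, t' with
    | [], [] => rfl
    | [], _ :: _ | _ :: _, [] => simp at hft
    | b :: s, b' :: s' =>
      rw [List.isChain_cons_cons] at hl hl'
      obtain rfl : b = b' := hR a b b' hl.1 hl'.1 (List.cons_eq_cons.1 hft).1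
      exact ih hl.2 hl'.2 (by simp) hft

namespace BTree

/-- The address following `a` when the next leaf has left depth `d`: drop the trailing 1's,
turn the last 0 into a 1, and append 0's up to left depth `d`. -/
def nextAddr : List Bool → ℕ → List Bool
  | [], _ => []
  | true :: a, d => true :: nextAddr a d
  | false :: a, d => if false ∈ a then false :: nextAddr a (d - 1) else true :: List.replicate d false

/-- `false ∈ a` says that `a` is not the rightmost address; it is what lets the relation pass
to the left subtree, where the rightmost address is followed by a leaf of the right subtree. -/
def IsNextAddr (a b : List Bool) : Prop := false ∈ a ∧ b = nextAddr a (b.count false)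

theorem IsNextAddr.right_unique {a b b' : List Bool} (h : IsNextAddr a b) (h' : IsNextAddr a b')
    (hcount : b.count false = b'.count false) : b = b' := by
  rw [h.2, h'.2, hcount]

theorem length_addrs (T : BTree) : T.addrs.length = T.numLeaves := by
  induction T with
  | leaf => rfl
  | node l r ihl ihr => simp [addrs, numLeaves, ihl, ihr]

theorem ld_eq_count_getElem (T : BTree) {j : ℕ} (hj : j < T.addrs.length) :
    T.ld j = T.addrs[j].count false := by
  rw [ld, addr, List.getD_eq_getElem _ _ hj]

theorem exists_head?_addrs (T : BTree) : ∃ k, T.addrs.head? = some (List.replicate k false) := by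
  induction T with
  | leaf => exact ⟨0, rfl⟩
  | node l r ihl _ =>
    obtain ⟨k, hk⟩ := ihl
    refine ⟨k + 1, ?_⟩
    rw [addrs, List.head?_append, List.head?_map, hk]
    rfl

theorem exists_getLast?_addrs (T : BTree) :
    ∃ k, T.addrs.getLast? = some (List.replicate k true) := by
  induction T with
  | leaf => exact ⟨0, rfl⟩
  | node l r _ ihr =>
    obtain ⟨k, hk⟩ := ihr
    refine ⟨k + 1, ?_⟩
    rw [addrs, List.getLast?_append, List.getLast?_map, hk]
    rfl

theorem isChain_addrs (T : BTree) : T.addrs.IsChain IsNextAddr := by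
  induction T with
  | leaf => exact List.isChain_singleton _
  | node l r ihl ihr =>
    obtain ⟨m, hm⟩ := exists_getLast?_addrs l
    obtain ⟨k, hk⟩ := exists_head?_addrs r
    refine List.isChain_append.2 ⟨?_, ?_, ?_⟩
    · refine (List.isChain_map _).2 (ihl.imp fun a b ⟨ha, hb⟩ => ⟨by simp, ?_⟩)
      simp [nextAddr, ha, ← hb]
    · refine (List.isChain_map _).2 (ihr.imp fun a b ⟨ha, hb⟩ => ⟨by simp [ha], ?_⟩)
      simp [nextAddr, ← hb]
    · simp [hm, hk, IsNextAddr, nextAddr]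

theorem addrs_injective : Function.Injective addrs := by
  intro T T' h
  induction T generalizing T' with
  | leaf =>
    cases T' with
    | leaf => rfl
    | node l' r' =>
      have : [] ∈ (node l' r').addrs := h ▸ List.mem_singleton_self _
      simp [addrs] at this
  | node l r ihl ihr =>
    cases T' with
    | leaf =>
      have : [] ∈ (node l r).addrs := h ▸ List.mem_singleton_self _
      simp [addrs] at this
    | node l' r' =>
      have hl := congrArg (fun L => (L.filter (·.head? == some false)).map List.tail) h
      have hr := congrArg (fun L => (L.filter (·.head? == some true)).map List.tail) h
      exact congrArg₂ node (ihl (by simpa [addrs, List.filter_map, Function.comp_def] using hl))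
        (ihr (by simpa [addrs, List.filter_map, Function.comp_def] using hr))

theorem take_addrs_eq_of_ld_eq {T T' : BTree} {k : ℕ} (hk : k ≤ T.numLeaves)
    (hk' : k ≤ T'.numLeaves) (h : ∀ j < k, T.ld j = T'.ld j) :
    T.addrs.take k = T'.addrs.take k := by
  rw [← length_addrs] at hk hk'
  refine List.eq_of_isChain_of_map_eq (List.count false)
    (fun _ _ _ hb hb' => hb.right_unique hb') ((isChain_addrs T).take k)
    ((isChain_addrs T').take k) ?_ ?_
  · intro a ha a' ha' hcount
    obtain ⟨m, hm⟩ := exists_head?_addrs T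
    obtain ⟨m', hm'⟩ := exists_head?_addrs T'
    simp only [List.head?_take, hm, hm', Option.mem_def, Option.ite_none_left_eq_some,
      Option.some_inj] at ha ha'
    rw [← ha.2, ← ha'.2] at hcount ⊢
    simpa using hcount
  · refine List.ext_getElem (by simp; omega) fun j hj _ => ?_
    simp only [List.length_map, List.length_take, lt_inf_iff] at hj
    simp only [List.getElem_map, List.getElem_take]
    rw [← ld_eq_count_getElem, ← ld_eq_count_getElem, h j hj.1]

end BTree

/-- The left depths of the first `i+1` leaves determine their addresses; in
particular, a binary tree is uniquely determined by its left depth sequence. -/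
theorem stmt1 (n : ℕ) :
    (∀ T T' : BTree, T.numLeaves = n → T'.numLeaves = n → ∀ i < n,
      (∀ j ≤ i, T.ld j = T'.ld j) → ∀ j ≤ i, T.addr j = T'.addr j) ∧
    (∀ T T' : BTree, T.numLeaves = n → T'.numLeaves = n →
      (∀ j < n, T.ld j = T'.ld j) → T = T') := by
  refine ⟨fun T T' hT hT' i hi hld j hj => ?_, fun T T' hT hT' hld => ?_⟩
  · have htake := BTree.take_addrs_eq_of_ld_eq (k := i + 1) (by omega) (by omega)
      fun j hj => hld j (by omega)
    simpa [BTree.addr, List.getElem?_take, Nat.lt_succ_of_le hj] using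
      congrArg (List.getD · j []) htake
  · apply BTree.addrs_injective
    have htake := BTree.take_addrs_eq_of_ld_eq hT.ge hT'.ge hld
    rwa [List.take_of_length_le (by rw [BTree.length_addrs, hT]),
      List.take_of_length_le (by rw [BTree.length_addrs, hT'])] at htake
end

section
/- Let T and T' be distinct binary trees with n leaves each (leaves numbered left to right). Let i be the least index such that ld_T(i) ≠ ld_{T'}(i). Then rd_T(i) = rd_{T'}(i). -/
/-!
The first leaf has address `0^k`, and two consecutive leaves have addresses `w 0 1^t` and
`w 1 0^f` for a common stem `w`. The stem is recovered from the address of leaf `i` by stripping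
its trailing `1`s and the `0` before them, so the address of leaf `i + 1` is determined by that of
leaf `i` together with its own left depth `|w|₀ + f`. By induction the left depths of leaves
`0, …, i` determine the address of leaf `i`, and the right depth of leaf `i + 1`, namely `|w|₁ + 1`,
is already determined by the address of leaf `i`.
-/

theorem List.eq_of_append_cons_replicate_eq {α : Type*} {a b : α} (hab : a ≠ b)
    {u v : List α} {s t : ℕ} (h : u ++ a :: replicate s b = v ++ a :: replicate t b) :
    u = v := by
  suffices key : ∀ s t : ℕ, replicate s b ++ a :: u.reverse = replicate t b ++ a :: v.reverse →
      u.reverse = v.reverse by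
    apply reverse_injective
    apply key s t
    simpa using congrArg reverse h
  intro s
  induction s with
  | zero | succ s ih => rintro (_ | t) h <;> simp_all [replicate_succ]

namespace BTree

theorem numLeaves_pos (T : BTree) : 0 < T.numLeaves := by
  induction T with
  | leaf => exact Nat.one_pos
  | node l r ihl _ => exact Nat.add_pos_left ihl _

theorem addr_node_of_lt {l r : BTree} {i : ℕ} (h : i < l.numLeaves) :
    (node l r).addr i = false :: l.addr i := by
  rw [← length_addrs] at h
  rw [addr, addr, addrs, List.getD_append _ _ _ _ (by simpa using h),
    List.getD_eq_getElem _ _ (by simpa using h), List.getD_eq_getElem _ _ h]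
  simp

theorem addr_node_of_le {l r : BTree} {i : ℕ} (hl : l.numLeaves ≤ i)
    (hi : i < (node l r).numLeaves) :
    (node l r).addr i = true :: r.addr (i - l.numLeaves) := by
  have hr : i - l.numLeaves < r.addrs.length := by
    rw [length_addrs]; simp only [numLeaves] at hi; omega
  rw [← length_addrs] at hl
  rw [addr, addr, addrs, List.getD_append_right _ _ _ _ (by simpa using hl),
    List.getD_eq_getElem _ _ (by simpa [length_addrs] using hr), List.getD_eq_getElem _ _ hr]
  simp [length_addrs]

theorem addr_zero (T : BTree) : T.addr 0 = List.replicate (T.ld 0) false := by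
  suffices h : ∃ k, T.addr 0 = List.replicate k false by
    obtain ⟨k, hk⟩ := h
    simp [ld, hk]
  induction T with
  | leaf => exact ⟨0, rfl⟩
  | node l r ihl _ =>
    obtain ⟨k, hk⟩ := ihl
    exact ⟨k + 1, by rw [addr_node_of_lt l.numLeaves_pos, hk]; rfl⟩

theorem rd_zero (T : BTree) : T.rd 0 = 0 := by
  simp [rd, addr_zero, List.count_replicate]

theorem exists_addr_numLeaves_sub_one (T : BTree) :
    ∃ k, T.addr (T.numLeaves - 1) = List.replicate k true := by
  induction T with
  | leaf => exact ⟨0, rfl⟩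
  | node l r _ ihr =>
    obtain ⟨k, hk⟩ := ihr
    have hr := r.numLeaves_pos
    have hlast : (node l r).numLeaves - 1 - l.numLeaves = r.numLeaves - 1 := by
      simp only [numLeaves]; omega
    refine ⟨k + 1, ?_⟩
    rw [addr_node_of_le (by simp only [numLeaves]; omega) (by simp only [numLeaves]; omega),
      hlast, hk]
    rfl

theorem exists_addr_and_addr_succ (T : BTree) {i : ℕ} (h : i + 1 < T.numLeaves) :
    ∃ w t f, T.addr i = w ++ false :: List.replicate t true ∧
      T.addr (i + 1) = w ++ true :: List.replicate f false := by
  induction T generalizing i with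
  | leaf => simp [numLeaves] at h
  | node l r ihl ihr =>
    rcases lt_trichotomy (i + 1) l.numLeaves with hc | hc | hc
    · obtain ⟨w, t, f, h₁, h₂⟩ := ihl hc
      refine ⟨false :: w, t, f, ?_, ?_⟩
      · rw [addr_node_of_lt (by omega), h₁]; rfl
      · rw [addr_node_of_lt hc, h₂]; rfl
    · obtain ⟨k, hk⟩ := l.exists_addr_numLeaves_sub_one
      refine ⟨[], k, r.ld 0, ?_, ?_⟩
      · rw [addr_node_of_lt (by omega), show i = l.numLeaves - 1 by omega, hk]; rfl
      · rw [addr_node_of_le (by omega) h, show i + 1 - l.numLeaves = 0 by omega, r.addr_zero]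
        rfl
    · obtain ⟨w, t, f, h₁, h₂⟩ := ihr (i := i - l.numLeaves) (by simp only [numLeaves] at h; omega)
      refine ⟨true :: w, t, f, ?_, ?_⟩
      · rw [addr_node_of_le (by omega) (by omega), h₁]; rfl
      · rw [addr_node_of_le (by omega) h, show i + 1 - l.numLeaves = i - l.numLeaves + 1 by omega,
          h₂]
        rfl

theorem exists_addr_succ_of_addr_eq {T T' : BTree} {i : ℕ} (h : i + 1 < T.numLeaves)
    (h' : i + 1 < T'.numLeaves) (heq : T.addr i = T'.addr i) :
    ∃ w f f', T.addr (i + 1) = w ++ true :: List.replicate f false ∧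
      T'.addr (i + 1) = w ++ true :: List.replicate f' false := by
  obtain ⟨w, t, f, h₁, h₂⟩ := T.exists_addr_and_addr_succ h
  obtain ⟨w', t', f', h₁', h₂'⟩ := T'.exists_addr_and_addr_succ h'
  obtain rfl : w = w' :=
    List.eq_of_append_cons_replicate_eq Bool.false_ne_true (h₁.symm.trans (heq.trans h₁'))
  exact ⟨w, f, f', h₂, h₂'⟩

theorem addr_eq_of_forall_ld_eq {T T' : BTree} {i : ℕ} (h : i < T.numLeaves)
    (h' : i < T'.numLeaves) (hld : ∀ j ≤ i, T.ld j = T'.ld j) : T.addr i = T'.addr i := by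
  induction i with
  | zero => rw [addr_zero, addr_zero, hld 0 le_rfl]
  | succ i ih =>
    obtain ⟨w, f, f', h₁, h₂⟩ := exists_addr_succ_of_addr_eq h h'
      (ih (by omega) (by omega) fun j hj => hld j (by omega))
    have hf : f = f' := by
      have := hld (i + 1) le_rfl
      simp only [ld, h₁, h₂, List.count_append, List.count_cons, List.count_replicate] at this
      simpa using this
    rw [h₁, h₂, hf]

theorem rd_succ_eq_of_addr_eq {T T' : BTree} {i : ℕ} (h : i + 1 < T.numLeaves)
    (h' : i + 1 < T'.numLeaves) (heq : T.addr i = T'.addr i) :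
    T.rd (i + 1) = T'.rd (i + 1) := by
  obtain ⟨w, f, f', h₁, h₂⟩ := exists_addr_succ_of_addr_eq h h' heq
  simp [rd, h₁, h₂, List.count_append, List.count_replicate]

end BTree

theorem stmt2_general (T T' : BTree) (n i : ℕ)
    (hT : T.numLeaves = n) (hT' : T'.numLeaves = n) (hi : i < n)
    (hleast : ∀ j < i, T.ld j = T'.ld j) :
    T.rd i = T'.rd i := by
  subst hT
  cases i with
  | zero => rw [BTree.rd_zero, BTree.rd_zero]
  | succ i =>
    exact BTree.rd_succ_eq_of_addr_eq hi (by omega) <|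
      BTree.addr_eq_of_forall_ld_eq (by omega) (by omega) fun j hj => hleast j (by omega)

/-- For distinct binary trees with `n` leaves, at the least index where the left
depths differ, the right depths coincide. -/
theorem stmt2 (T T' : BTree) (n i : ℕ)
    (hT : T.numLeaves = n) (hT' : T'.numLeaves = n) (hne : T ≠ T')
    (hi : i < n) (hdiff : T.ld i ≠ T'.ld i)
    (hleast : ∀ j < i, T.ld j = T'.ld j) :
    T.rd i = T'.rd i :=
  stmt2_general T T' n i hT hT' hi hleast
end

section
/- Let 0 < p < 1 be a real number. If T and T' are binary trees with n leaves such that p^{ld_T(i)} (1−p)^{rd_T(i)} = p^{ld_{T'}(i)} (1−p)^{rd_{T'}(i)} for all i = 1,...,n, then T = T'. -/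
theorem List.eq_nil_of_sum_append_eq {M : Type*} [AddCommMonoid M] [PartialOrder M]
    [IsOrderedCancelAddMonoid M] {l m : List M} (hm : ∀ x ∈ m, 0 < x)
    (hsum : (l ++ m).sum = l.sum) : m = [] := by
  by_contra hne
  rw [List.sum_append] at hsum
  exact (lt_add_of_pos_right l.sum (m.sum_pos hm hne)).ne' hsum

theorem List.eq_of_append_eq_append_of_sum_eq {M : Type*} [AddCommMonoid M] [PartialOrder M]
    [IsOrderedCancelAddMonoid M] {l₁ r₁ l₂ r₂ : List M} (hpos : ∀ x ∈ l₁ ++ r₁, 0 < x)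
    (h : l₁ ++ r₁ = l₂ ++ r₂) (hsum : l₁.sum = l₂.sum) : l₁ = l₂ := by
  rcases List.append_eq_append_iff.mp h with ⟨m, rfl, rfl⟩ | ⟨m, rfl, -⟩
  · have hm : m = [] :=
      List.eq_nil_of_sum_append_eq (fun x hx => hpos x (by simp [hx])) hsum.symm
    simp [hm]
  · have hm : m = [] :=
      List.eq_nil_of_sum_append_eq (fun x hx => hpos x (by simp [hx])) hsum
    simp [hm]

theorem List.sum_map_const_mul {R : Type*} [NonUnitalNonAssocSemiring R] (l : List R) (c : R) :
    (l.map (c * ·)).sum = c * l.sum := by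
  simpa using List.sum_map_mul_left l id c

namespace BTree

noncomputable def leafProb (p : ℝ) (w : List Bool) : ℝ :=
  p ^ w.count false * (1 - p) ^ w.count true

noncomputable def leafProbs (p : ℝ) (T : BTree) : List ℝ := T.addrs.map (leafProb p)

theorem leafProbs_leaf (p : ℝ) : leaf.leafProbs p = [1] := by
  simp [leafProbs, addrs, leafProb]

theorem leafProbs_node (p : ℝ) (L R : BTree) :
    (node L R).leafProbs p = (L.leafProbs p).map (p * ·) ++ (R.leafProbs p).map ((1 - p) * ·) := by
  simp only [leafProbs, addrs, List.map_append, List.map_map]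
  congr 2 <;> funext w <;> simp [leafProb, pow_succ] <;> ring

theorem length_leafProbs (p : ℝ) (T : BTree) : (T.leafProbs p).length = T.numLeaves := by
  simp [leafProbs, length_addrs]

theorem getElem_leafProbs (p : ℝ) (T : BTree) {i : ℕ} (hi : i < (T.leafProbs p).length) :
    (T.leafProbs p)[i] = p ^ T.ld i * (1 - p) ^ T.rd i := by
  have hi' : i < T.addrs.length := by simpa [leafProbs] using hi
  rw [ld, rd, addr, List.getD_eq_getElem _ _ hi']
  simp [leafProbs, leafProb]

theorem leafProbs_node_ne_leaf (p : ℝ) (L R : BTree) :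
    (node L R).leafProbs p ≠ leaf.leafProbs p := by
  intro h
  have := congrArg List.length h
  simp only [length_leafProbs, numLeaves] at this
  have := L.numLeaves_pos
  have := R.numLeaves_pos
  omega

theorem sum_leafProbs (p : ℝ) (T : BTree) : (T.leafProbs p).sum = 1 := by
  induction T with
  | leaf => simp [leafProbs_leaf]
  | node L R ihL ihR =>
    rw [leafProbs_node, List.sum_append, List.sum_map_const_mul, List.sum_map_const_mul, ihL, ihR]
    ring

theorem leafProbs_pos {p : ℝ} (hp0 : 0 < p) (hp1 : p < 1) (T : BTree) :
    ∀ x ∈ T.leafProbs p, 0 < x := by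
  simp only [leafProbs, List.mem_map]
  rintro _ ⟨w, -, rfl⟩
  exact mul_pos (pow_pos hp0 _) (pow_pos (sub_pos.mpr hp1) _)

theorem leafProbs_injective {p : ℝ} (hp0 : 0 < p) (hp1 : p < 1) :
    Function.Injective (leafProbs p) := by
  intro T
  induction T with
  | leaf =>
    rintro (_ | ⟨L', R'⟩) h
    · rfl
    · exact absurd h.symm (leafProbs_node_ne_leaf p L' R')
  | node L R ihL ihR =>
    rintro (_ | ⟨L', R'⟩) h
    · exact absurd h (leafProbs_node_ne_leaf p L R)
    have hpos := leafProbs_pos hp0 hp1 (node L R)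
    simp only [leafProbs_node] at h hpos
    have hleft := List.eq_of_append_eq_append_of_sum_eq hpos h <| by
      rw [List.sum_map_const_mul, List.sum_map_const_mul, sum_leafProbs, sum_leafProbs]
    have hright := List.append_cancel_left (hleft ▸ h)
    rw [ihL (List.map_injective_iff.mpr (mul_right_injective₀ hp0.ne') hleft),
      ihR (List.map_injective_iff.mpr (mul_right_injective₀ (sub_pos.mpr hp1).ne') hright)]

end BTree

/-- A binary tree is uniquely determined by its leaf probabilities. -/
theorem stmt6 (p : ℝ) (hp0 : 0 < p) (hp1 : p < 1) (T T' : BTree) (n : ℕ)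
    (hT : T.numLeaves = n) (hT' : T'.numLeaves = n)
    (h : ∀ i < n, p ^ T.ld i * (1 - p) ^ T.rd i = p ^ T'.ld i * (1 - p) ^ T'.rd i) :
    T = T' := by
  apply BTree.leafProbs_injective hp0 hp1
  refine List.ext_getElem (by rw [BTree.length_leafProbs, BTree.length_leafProbs, hT, hT'])
    fun i hi hi' => ?_
  rw [BTree.getElem_leafProbs, BTree.getElem_leafProbs]
  exact h i (by rwa [BTree.length_leafProbs, hT] at hi)
end

section
/- Let A = (A, ∘) with x ∘ y = φ₀(x) + φ₁(y), where φ₀, φ₁ are automorphisms of a group (A, +). Then A satisfies the bracketing identity t ≈ t' (for bracketings t, t' of size n with trees T, T') if and only if φ_{addr_T(i)} = φ_{addr_{T'}(i)} for all i = 1,...,n. -/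
/-- Evaluation of the bracketing corresponding to a binary tree, with the
variables `f k, f (k+1), ...` plugged in at the leaves, left to right. -/
def BTree.evalAux {A : Type*} (op : A → A → A) (f : ℕ → A) : BTree → ℕ → A
  | .leaf, k => f k
  | .node l r, k => op (l.evalAux op f k) (r.evalAux op f (k + l.numLeaves))

/-- Term operation induced on `A` by the bracketing corresponding to `T`. -/
def BTree.eval {A : Type*} (op : A → A → A) (T : BTree) (f : ℕ → A) : A :=
  T.evalAux op f 0

/-- `φ_w` for a word `w` over `{0,1}`: `φ_ε = id`, `φ_{0w} = φ₀ ∘ φ_w`, `φ_{1w} = φ₁ ∘ φ_w`. -/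
def phiWord {A : Type*} (φ₀ φ₁ : A → A) : List Bool → A → A
  | [] => id
  | c :: w => (if c then φ₁ else φ₀) ∘ phiWord φ₀ φ₁ w

namespace BTree

theorem addr_node_add {l r : BTree} {j : ℕ} (h : j < r.numLeaves) :
    (node l r).addr (l.numLeaves + j) = true :: r.addr j := by
  have hj : j < r.addrs.length := r.length_addrs ▸ h
  simp [addr, addrs, List.getD_eq_getElem?_getD, List.getElem?_append_right, length_addrs,
    List.getElem?_eq_getElem hj]

end BTree

theorem phiWord_map_zero {A F : Type*} [Zero A] [FunLike F A A] [ZeroHomClass F A A]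
    (φ₀ φ₁ : F) (w : List Bool) : phiWord φ₀ φ₁ w 0 = 0 := by
  induction w with
  | nil => rfl
  | cons c w ih => cases c <;> simp [phiWord, ih]

section LinearOperation

variable {A F : Type*} [AddMonoid A] [FunLike F A A] [AddMonoidHomClass F A A] (φ₀ φ₁ : F)

theorem BTree.evalAux_add_map (T : BTree) (f : ℕ → A) (k : ℕ) :
    T.evalAux (fun x y => φ₀ x + φ₁ y) f k
      = ((List.range T.numLeaves).map fun i => phiWord φ₀ φ₁ (T.addr i) (f (k + i))).sum := by
  induction T generalizing k with
  | leaf => simp [evalAux, numLeaves, addr, addrs, phiWord]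
  | node l r ihl ihr =>
    rw [evalAux, ihl, ihr, numLeaves, List.range_add, List.map_append, List.sum_append,
      map_list_sum, map_list_sum, List.map_map, List.map_map, List.map_map]
    congr 2
    · refine List.map_congr_left fun i hi => ?_
      simp [addr_node_of_lt (List.mem_range.mp hi), phiWord]
    · refine List.map_congr_left fun j hj => ?_
      simp [addr_node_add (List.mem_range.mp hj), phiWord, Nat.add_assoc]

theorem BTree.eval_add_map (T : BTree) (f : ℕ → A) :
    T.eval (fun x y => φ₀ x + φ₁ y) f
      = ((List.range T.numLeaves).map fun i => phiWord φ₀ φ₁ (T.addr i) (f i)).sum := by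
  simp [eval, evalAux_add_map]

theorem BTree.eval_add_map_single (T : BTree) {i : ℕ} (hi : i < T.numLeaves) (x : A) :
    T.eval (fun x y => φ₀ x + φ₁ y) (Pi.single i x) = phiWord φ₀ φ₁ (T.addr i) x := by
  rw [eval_add_map, List.sum_map_eq_nsmul_single i]
  · simp [List.count_range, hi]
  · intro j hj _
    simp [hj, phiWord_map_zero]

end LinearOperation

/-- A linear quasigroup satisfies the bracketing identity `t ≈ t'` iff
`φ_{addr_T(i)} = φ_{addr_{T'}(i)}` for all leaves `i`. -/
theorem stmt10 (A : Type*) [AddGroup A] (φ₀ φ₁ : AddAut A)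
    (T T' : BTree) (n : ℕ) (hT : T.numLeaves = n) (hT' : T'.numLeaves = n) :
    (∀ f : ℕ → A, T.eval (fun x y => φ₀ x + φ₁ y) f
        = T'.eval (fun x y => φ₀ x + φ₁ y) f) ↔
      ∀ i < n, phiWord (⇑φ₀) (⇑φ₁) (T.addr i) = phiWord (⇑φ₀) (⇑φ₁) (T'.addr i) := by
  constructor
  · intro h i hi
    funext x
    have hsingle := h (Pi.single i x)
    rwa [T.eval_add_map_single φ₀ φ₁ (hT ▸ hi), T'.eval_add_map_single φ₀ φ₁ (hT' ▸ hi)]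
      at hsingle
  · intro h f
    rw [T.eval_add_map, T'.eval_add_map, hT, hT']
    exact congrArg List.sum (List.map_congr_left fun i hi => by rw [h i (List.mem_range.mp hi)])
end

section
/- Let A = (A, ∘) with x ∘ y = φ(x) + y for an automorphism φ of a group (A,+) of order k. Then A satisfies a bracketing identity t ≈ t' if and only if ld_T(i) ≡ ld_{T'}(i) (mod k) for all leaves i, where T, T' are the binary trees of t, t'. -/
/-!
Unfolding `x ∘ y = φ x + y` along the tree, a left step applies `φ` to the whole left subterm and
a right step applies nothing, so the term operation of `T` is `x ↦ ∑ᵢ φ^{ld_T(i)} (xᵢ)`, summed in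
leaf order. Putting a single nonzero variable at leaf `i` shows that `T` and `T'` induce the same
operation iff `φ^{ld_T(i)} = φ^{ld_T'(i)}` for every leaf, i.e. iff the left depths agree modulo
the order of `φ`.
-/

theorem List.sum_map_eq_single {α M : Type*} [AddMonoid M] {l : List α} {g : α → M} {a : α}
    (hl : l.Nodup) (ha : a ∈ l) (hg : ∀ x ∈ l, x ≠ a → g x = 0) : (l.map g).sum = g a := by
  induction l with
  | nil => simp at ha
  | cons x xs ih =>
    obtain ⟨hx, hxs⟩ := List.nodup_cons.mp hl
    rw [List.map_cons, List.sum_cons]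
    by_cases hxa : x = a
    · subst hxa
      have hzero : (xs.map g).sum = 0 :=
        List.sum_eq_zero fun y hy => by
          obtain ⟨z, hz, rfl⟩ := List.mem_map.mp hy
          exact hg z (.tail _ hz) (ne_of_mem_of_not_mem hz hx)
      rw [hzero, add_zero]
    · rw [hg x (.head _) hxa, zero_add,
        ih hxs (List.mem_of_ne_of_mem (Ne.symm hxa) ha) fun y hy => hg y (.tail _ hy)]

namespace BTree

theorem addr_node_left {l : BTree} (r : BTree) {i : ℕ} (hi : i < l.numLeaves) :
    (node l r).addr i = false :: l.addr i := by
  rw [← length_addrs] at hi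
  simp [addr, addrs, List.getD_eq_getElem?_getD, List.getElem?_append_left, hi]

theorem addr_node_right (l : BTree) {r : BTree} {j : ℕ} (hj : j < r.numLeaves) :
    (node l r).addr (l.numLeaves + j) = true :: r.addr j := by
  rw [← length_addrs] at hj
  simp [addr, addrs, List.getD_eq_getElem?_getD, List.getElem?_append_right, length_addrs,
    List.getElem?_eq_getElem hj]

theorem ld_node_left {l : BTree} (r : BTree) {i : ℕ} (hi : i < l.numLeaves) :
    (node l r).ld i = l.ld i + 1 := by
  simp [ld, addr_node_left r hi]

theorem ld_node_right (l : BTree) {r : BTree} {j : ℕ} (hj : j < r.numLeaves) :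
    (node l r).ld (l.numLeaves + j) = r.ld j := by
  simp [ld, addr_node_right l hj]

section AffineEval

variable {A : Type*} [AddMonoid A] (φ : AddAut A)

theorem evalAux_eq_sum (f : ℕ → A) (T : BTree) (k : ℕ) :
    T.evalAux (fun x y => φ x + y) f k
      = ((List.range T.numLeaves).map fun i => (T.ld i • φ) (f (k + i))).sum := by
  induction T generalizing k with
  | leaf => simp [evalAux, numLeaves, ld, addr, addrs]
  | node l r ihl ihr =>
    rw [evalAux, numLeaves, List.range_add, List.map_append, List.sum_append, ihl, ihr,
      map_list_sum, List.map_map, List.map_map]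
    congr 1
    · refine congrArg List.sum (List.map_congr_left fun i hi => ?_)
      rw [Function.comp_apply, ld_node_left r (List.mem_range.mp hi), succ_nsmul',
        AddAut.add_apply]
    · refine congrArg List.sum (List.map_congr_left fun j hj => ?_)
      rw [Function.comp_apply, ld_node_right l (List.mem_range.mp hj), add_assoc]

theorem eval_eq_sum (T : BTree) (f : ℕ → A) :
    T.eval (fun x y => φ x + y) f
      = ((List.range T.numLeaves).map fun i => (T.ld i • φ) (f i)).sum := by
  simpa [eval] using evalAux_eq_sum φ f T 0

theorem eval_single (T : BTree) {i : ℕ} (hi : i < T.numLeaves) (a : A) :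
    T.eval (fun x y => φ x + y) (Pi.single i a) = (T.ld i • φ) a := by
  rw [eval_eq_sum, List.sum_map_eq_single List.nodup_range (List.mem_range.mpr hi)]
  · simp
  · intro j _ hj
    simp [hj]

end AffineEval

end BTree

theorem stmt12_general (A : Type*) [AddGroup A] (φ : AddAut A) (k : ℕ)
    (hk : addOrderOf φ = k)
    (T T' : BTree) (n : ℕ) (hT : T.numLeaves = n) (hT' : T'.numLeaves = n) :
    (∀ f : ℕ → A, T.eval (fun x y => φ x + y) f
        = T'.eval (fun x y => φ x + y) f) ↔
      ∀ i < n, Nat.ModEq k (T.ld i) (T'.ld i) := by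
  subst hk hT
  constructor
  · intro h i hi
    refine nsmul_eq_nsmul_iff_modEq.mp (AddEquiv.ext fun a => ?_)
    simpa only [BTree.eval_single φ _ hi, BTree.eval_single φ _ (hT' ▸ hi)]
      using h (Pi.single i a)
  · intro h f
    rw [BTree.eval_eq_sum, BTree.eval_eq_sum, hT']
    exact congrArg List.sum (List.map_congr_left fun i hi => by
      rw [nsmul_eq_nsmul_iff_modEq.mpr (h i (List.mem_range.mp hi))])

/-- If `x ∘ y = φ(x) + y` with `φ` of order `k`, then `t ≈ t'` holds iff the
left depth sequences of the two trees agree modulo `k`. -/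
theorem stmt12 (A : Type*) [AddGroup A] (φ : AddAut A) (k : ℕ)
    (hk : addOrderOf φ = k) (hk0 : 0 < k)
    (T T' : BTree) (n : ℕ) (hT : T.numLeaves = n) (hT' : T'.numLeaves = n) :
    (∀ f : ℕ → A, T.eval (fun x y => φ x + y) f
        = T'.eval (fun x y => φ x + y) f) ↔
      ∀ i < n, Nat.ModEq k (T.ld i) (T'.ld i) :=
  stmt12_general A φ k hk T T' n hT hT'
end
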